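/- For any weight vector w ∈ ℝ^n and reliability vector r ∈ (-1,1)^n, define φ(w,r) = -min_{t>0} (1/n)∑_i log((1/2)e^{t w_i}(1-r_i) + (1/2)e^{-t w_i}(1+r_i)) and Φ(r) = -(1/(2n))∑_i log(1-r_i²). Then φ(w,r) ≤ Φ(r), with equality when w_i = log((1+r_i)/(1-r_i)). -/

import Mathlib

/-!
Each factor of the Chernoff bound is at least `√(1 - rᵢ²)` by AM-GM, since the product of its
two summands is `(1 - rᵢ²)/4` whatever the value of `t wᵢ`; this bounds the infimum below by
`-Φ`. For the Nitzan–Paroush weights the two summands coincide at `t = 1/2`, so the bound is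
attained there.
-/

open Real Finset

lemma sqrt_one_sub_sq_le_chernoff_factor (a : ℝ) {r : ℝ} (hr : r ∈ Set.Icc (-1 : ℝ) 1) :
    √(1 - r ^ 2) ≤ (1 / 2) * exp a * (1 - r) + (1 / 2) * exp (-a) * (1 + r) := by
  obtain ⟨hr₁, hr₂⟩ := hr
  set u := √(exp a * (1 - r))
  set v := √(exp (-a) * (1 + r))
  have hu : u ^ 2 = exp a * (1 - r) := sq_sqrt (by have := exp_pos a; nlinarith)
  have hv : v ^ 2 = exp (-a) * (1 + r) := sq_sqrt (by have := exp_pos (-a); nlinarith)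
  have huv : u * v = √(1 - r ^ 2) := by
    rw [← sqrt_mul (by have := exp_pos a; nlinarith), mul_mul_mul_comm, ← exp_add,
      add_neg_cancel, exp_zero, one_mul]
    ring_nf
  rw [← huv]
  nlinarith [two_mul_le_add_sq u v]

lemma half_log_one_sub_sq_le_log_chernoff_factor (a : ℝ) {r : ℝ}
    (hr : r ∈ Set.Ioo (-1 : ℝ) 1) :
    (1 / 2) * log (1 - r ^ 2) ≤
      log ((1 / 2) * exp a * (1 - r) + (1 / 2) * exp (-a) * (1 + r)) := by
  have hpos : 0 < 1 - r ^ 2 := by nlinarith [hr.1, hr.2]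
  rw [one_div_mul_eq_div, ← log_sqrt hpos.le]
  exact log_le_log (sqrt_pos.2 hpos)
    (sqrt_one_sub_sq_le_chernoff_factor a (Set.Ioo_subset_Icc_self hr))

lemma chernoff_factor_half_log_odds {r : ℝ} (hr : r ∈ Set.Ioo (-1 : ℝ) 1) :
    (1 / 2) * exp ((1 / 2) * log ((1 + r) / (1 - r))) * (1 - r)
      + (1 / 2) * exp (-((1 / 2) * log ((1 + r) / (1 - r)))) * (1 + r) = √(1 - r ^ 2) := by
  have hp : 0 < 1 + r := by linarith [hr.1]
  have hm : 0 < 1 - r := by linarith [hr.2]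
  have hexp : exp ((1 / 2) * log ((1 + r) / (1 - r))) = √(1 + r) / √(1 - r) := by
    rw [← sqrt_div hp.le, one_div_mul_eq_div, ← log_sqrt (by positivity),
      exp_log (sqrt_pos.2 (by positivity))]
  have hp' := sqrt_pos.2 hp
  have hm' := sqrt_pos.2 hm
  rw [exp_neg, hexp, show 1 - r ^ 2 = (1 + r) * (1 - r) by ring, sqrt_mul hp.le,
    ← sq_sqrt hp.le, ← sq_sqrt hm.le]
  simp only [sqrt_sq hp'.le, sqrt_sq hm'.le]
  field_simp
  ring

lemma log_chernoff_factor_half_log_odds {r : ℝ} (hr : r ∈ Set.Ioo (-1 : ℝ) 1) :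
    log ((1 / 2) * exp ((1 / 2) * log ((1 + r) / (1 - r))) * (1 - r)
      + (1 / 2) * exp (-((1 / 2) * log ((1 + r) / (1 - r)))) * (1 + r))
      = (1 / 2) * log (1 - r ^ 2) := by
  rw [chernoff_factor_half_log_odds hr, log_sqrt (by nlinarith [hr.1, hr.2])]
  ring

theorem wmv_exponent_le_renyi_general
    (n : ℕ) (r : Fin n → ℝ) (hr : ∀ i, r i ∈ Set.Ioo (-1 : ℝ) 1)
    (Φ : ℝ) (hΦ : Φ = -(1 / (2 * n)) * ∑ i, Real.log (1 - r i ^ 2))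
    (φ : (Fin n → ℝ) → ℝ)
    (hφ : ∀ w, φ w = -(⨅ t : {t : ℝ // 0 < t},
      (1 / n) * ∑ i, Real.log ((1 / 2) * Real.exp (t.1 * w i) * (1 - r i)
        + (1 / 2) * Real.exp (-(t.1 * w i)) * (1 + r i)))) :
    (∀ w, φ w ≤ Φ) ∧ φ (fun i => Real.log ((1 + r i) / (1 - r i))) = Φ := by
  set c := (1 / n : ℝ) * ∑ i, (1 / 2) * log (1 - r i ^ 2)
  have hΦc : Φ = -c := by
    simp only [hΦ, c, ← mul_sum]
    ring
  have lower : ∀ (w : Fin n → ℝ) (t : {t : ℝ // 0 < t}), c ≤ (1 / n) * ∑ i,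
      log ((1 / 2) * exp (t.1 * w i) * (1 - r i) + (1 / 2) * exp (-(t.1 * w i)) * (1 + r i)) :=
    fun w t => mul_le_mul_of_nonneg_left
      (sum_le_sum fun i _ => half_log_one_sub_sq_le_log_chernoff_factor _ (hr i)) (by positivity)
  have : Nonempty {t : ℝ // 0 < t} := ⟨⟨1, one_pos⟩⟩
  refine ⟨fun w => by rw [hφ, hΦc]; exact neg_le_neg (le_ciInf (lower w)), ?_⟩
  rw [hφ, hΦc, neg_inj]
  refine le_antisymm ?_ (le_ciInf (lower _))
  refine (ciInf_le ⟨c, Set.forall_mem_range.2 (lower _)⟩ ⟨1 / 2, one_half_pos⟩).trans_eq ?_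
  exact congrArg _ (sum_congr rfl fun i _ => log_chernoff_factor_half_log_odds (hr i))

/-- The Chernoff exponent `φ(w,r)` of weighted majority voting is at most the optimal
exponent `Φ(r) = -(1/(2n))∑ log(1 - rᵢ²)`, with equality for the Nitzan–Paroush
weights `wᵢ = log((1+rᵢ)/(1-rᵢ))`. -/
theorem wmv_exponent_le_renyi
    (n : ℕ) (hn : 0 < n) (r : Fin n → ℝ) (hr : ∀ i, r i ∈ Set.Ioo (-1 : ℝ) 1)
    (Φ : ℝ) (hΦ : Φ = -(1 / (2 * n)) * ∑ i, Real.log (1 - r i ^ 2))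
    (φ : (Fin n → ℝ) → ℝ)
    (hφ : ∀ w, φ w = -(⨅ t : {t : ℝ // 0 < t},
      (1 / n) * ∑ i, Real.log ((1 / 2) * Real.exp (t.1 * w i) * (1 - r i)
        + (1 / 2) * Real.exp (-(t.1 * w i)) * (1 + r i)))) :
    (∀ w, φ w ≤ Φ) ∧ φ (fun i => Real.log ((1 + r i) / (1 - r i))) = Φ :=
  wmv_exponent_le_renyi_general n r hr Φ hΦ φ hφ
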